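/- For every d ≥ 2 and every finite point set T = {ξ^1,…,ξ^m} ⊂ [0,1)^d one has disp(T) ≤ 2^d (D^2(T))^{1/2}. -/

import Mathlib

open MeasureTheory

/-- The univariate hat function: `h_u(t) = 1 - |t|/u` for `|t| ≤ u`, `0` otherwise. -/
noncomputable def hatFn (u t : ℝ) : ℝ := if |t| ≤ u then 1 - |t| / u else 0

/-- The smooth hat function `h_B` of the box `B = ∏_j [x⁰_j - u_j, x⁰_j + u_j)`:
`h_B(x) = (∏_j u_j) · ∏_j h_{u_j}(x_j - x⁰_j)`. -/
noncomputable def hatBox {d : ℕ} (x0 u : Fin d → ℝ) (x : Fin d → ℝ) : ℝ :=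
  (∏ j, u j) * ∏ j, hatFn (u j) (x j - x0 j)

/-- The `2`-smooth discrepancy of the point set `ξ¹,…,ξ^m ⊂ [0,1)^d`:
`D²(T) = sup_{B = [x,y) ⊆ [0,1)^d} |∫ h_B - (1/m) Σ_μ h_B(ξ^μ)|`. -/
noncomputable def smoothDiscrepancy (d m : ℕ) (ξ : Fin m → (Fin d → ℝ)) : ℝ :=
  sSup {e : ℝ | ∃ x0 u : Fin d → ℝ, (∀ j, 0 < u j) ∧
    (∀ j, 0 ≤ x0 j - u j) ∧ (∀ j, x0 j + u j ≤ 1) ∧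
    e = |(∫ x : Fin d → ℝ, hatBox x0 u x) - (m : ℝ)⁻¹ * ∑ μ, hatBox x0 u (ξ μ)|}

/-
The hat function `h_B` of a box `B = [x, y)` with centre `x⁰` and half-widths `u` vanishes outside
`B`. If `B` contains no point of `T`, every `h_B(ξ^μ)` is therefore zero and the discrepancy of
`h_B` is its full integral `(∏ u_j)²`. Hence `(∏ u_j)² ≤ D²(T)`, and
`vol B = 2^d ∏ u_j ≤ 2^d √(D²(T))`.
-/

lemma hatFn_nonneg (u t : ℝ) : 0 ≤ hatFn u t := by
  unfold hatFn
  split_ifs with h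
  · linarith [div_le_one_of_le₀ h (le_trans (abs_nonneg t) h)]
  · exact le_rfl

lemma hatFn_le_one (u t : ℝ) : hatFn u t ≤ 1 := by
  unfold hatFn
  split_ifs with h
  · linarith [div_nonneg (abs_nonneg t) (le_trans (abs_nonneg t) h)]
  · exact zero_le_one

lemma hatFn_eq_zero_of_le_abs {u t : ℝ} (hu : 0 < u) (h : u ≤ |t|) : hatFn u t = 0 := by
  unfold hatFn
  split_ifs with h'
  · rw [le_antisymm h' h, div_self hu.ne', sub_self]
  · rfl

lemma integral_hatFn {u : ℝ} (hu : 0 < u) : ∫ t, hatFn u t = u := by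
  have hIoi : ∫ s in Set.Ioi 0, (if s ≤ u then 1 - s / u else 0) = ∫ s in 0..u, (1 - s / u) := by
    rw [intervalIntegral.integral_of_le hu.le, ← Set.Ioi_inter_Iic,
      ← setIntegral_indicator measurableSet_Iic]
    rfl
  calc ∫ t, hatFn u t = 2 * ∫ s in Set.Ioi 0, (if s ≤ u then 1 - s / u else 0) :=
        integral_comp_abs (f := fun s => if s ≤ u then 1 - s / u else 0)
    _ = u := by
      rw [hIoi, intervalIntegral.integral_sub intervalIntegrable_const
        (intervalIntegral.intervalIntegrable_id.div_const u), intervalIntegral.integral_div]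
      simp only [intervalIntegral.integral_const, integral_id, smul_eq_mul]
      field_simp
      ring

section hatBox

variable {d : ℕ} {x0 u : Fin d → ℝ}

lemma hatBox_nonneg (hu : ∀ j, 0 ≤ u j) (x : Fin d → ℝ) : 0 ≤ hatBox x0 u x :=
  mul_nonneg (Finset.prod_nonneg fun j _ => hu j) (Finset.prod_nonneg fun _ _ => hatFn_nonneg _ _)

lemma hatBox_le_prod (hu : ∀ j, 0 ≤ u j) (x : Fin d → ℝ) : hatBox x0 u x ≤ ∏ j, u j :=
  mul_le_of_le_one_right (Finset.prod_nonneg fun j _ => hu j)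
    (Finset.prod_le_one (fun _ _ => hatFn_nonneg _ _) fun _ _ => hatFn_le_one _ _)

lemma hatBox_eq_zero_of_le_abs (hu : ∀ j, 0 < u j) {x : Fin d → ℝ} {j : Fin d}
    (hj : u j ≤ |x j - x0 j|) : hatBox x0 u x = 0 :=
  mul_eq_zero_of_right _
    (Finset.prod_eq_zero (Finset.mem_univ j) (hatFn_eq_zero_of_le_abs (hu j) hj))

lemma integral_hatBox (hu : ∀ j, 0 < u j) : ∫ x, hatBox x0 u x = (∏ j, u j) ^ 2 := by
  simp only [hatBox, integral_const_mul,
    integral_fintype_prod_volume_eq_prod (fun j t => hatFn (u j) (t - x0 j)),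
    integral_sub_right_eq_self (hatFn _), integral_hatFn (hu _), sq]

end hatBox

lemma inv_mul_sum_le {m : ℕ} {f : Fin m → ℝ} {c : ℝ} (hc : 0 ≤ c) (hf : ∀ μ, f μ ≤ c) :
    (m : ℝ)⁻¹ * ∑ μ, f μ ≤ c := by
  refine inv_mul_le_of_le_mul₀ m.cast_nonneg hc ?_
  simpa using Finset.sum_le_card_nsmul Finset.univ f c fun μ _ => hf μ

lemma le_smoothDiscrepancy {d m : ℕ} (ξ : Fin m → Fin d → ℝ) {x0 u : Fin d → ℝ}
    (hu : ∀ j, 0 < u j) (hl : ∀ j, 0 ≤ x0 j - u j) (hr : ∀ j, x0 j + u j ≤ 1) :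
    |(∫ x, hatBox x0 u x) - (m : ℝ)⁻¹ * ∑ μ, hatBox x0 u (ξ μ)| ≤ smoothDiscrepancy d m ξ := by
  refine le_csSup ⟨1, ?_⟩ ⟨x0, u, hu, hl, hr, rfl⟩
  rintro e ⟨c, w, hw, hcl, hcr, rfl⟩
  have hw₀ : ∀ j, 0 ≤ w j := fun j => (hw j).le
  have hprod₀ : 0 ≤ ∏ j, w j := Finset.prod_nonneg fun j _ => hw₀ j
  have hprod₁ : ∏ j, w j ≤ 1 :=
    Finset.prod_le_one (fun j _ => hw₀ j) fun j _ => by linarith [hcl j, hcr j]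
  rw [integral_hatBox hw]
  exact abs_sub_le_of_nonneg_of_le (sq_nonneg _) (pow_le_one₀ hprod₀ hprod₁)
    (mul_nonneg (inv_nonneg.2 m.cast_nonneg) (Finset.sum_nonneg fun μ _ => hatBox_nonneg hw₀ _))
    (inv_mul_sum_le zero_le_one fun μ => (hatBox_le_prod hw₀ _).trans hprod₁)

lemma hatBox_midpoint_eq_zero_of_notMem {d : ℕ} {x y z : Fin d → ℝ} (hxy : ∀ j, x j < y j)
    (hz : ¬ ∀ j, z j ∈ Set.Ico (x j) (y j)) :
    hatBox (fun j => (x j + y j) / 2) (fun j => (y j - x j) / 2) z = 0 := by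
  obtain ⟨j, hj⟩ := not_forall.1 hz
  refine hatBox_eq_zero_of_le_abs (fun j => half_pos (sub_pos.2 (hxy j))) (j := j) (le_abs.2 ?_)
  rcases not_and_or.1 hj with h | h
  · right; linarith [not_le.1 h]
  · left; linarith [not_lt.1 h]

theorem dispersion_le_smooth_discrepancy (d : ℕ) (m : ℕ)
    (ξ : Fin m → (Fin d → ℝ)) :
    ∀ x y : Fin d → ℝ, (∀ j, 0 ≤ x j) → (∀ j, x j < y j) → (∀ j, y j ≤ 1) →
      (∀ μ, ¬ (∀ j, ξ μ j ∈ Set.Ico (x j) (y j))) →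
      ∏ j, (y j - x j) ≤ 2 ^ d * Real.sqrt (smoothDiscrepancy d m ξ) := by
  intro x y hx hxy hy hempty
  have hu : ∀ j, 0 < (y j - x j) / 2 := fun j => half_pos (sub_pos.2 (hxy j))
  have hdisc := le_smoothDiscrepancy ξ (x0 := fun j => (x j + y j) / 2) hu
    (fun j => by linarith [hx j]) (fun j => by linarith [hy j])
  simp only [hatBox_midpoint_eq_zero_of_notMem hxy (hempty _), Finset.sum_const_zero, mul_zero,
    sub_zero, integral_hatBox hu, abs_sq] at hdisc
  calc ∏ j, (y j - x j) = 2 ^ d * ∏ j, (y j - x j) / 2 := by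
        simp only [Finset.prod_div_distrib, Finset.prod_const, Finset.card_univ, Fintype.card_fin]
        field_simp
    _ ≤ 2 ^ d * Real.sqrt (smoothDiscrepancy d m ξ) := by
        gcongr
        exact Real.le_sqrt_of_sq_le hdisc
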